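/- arXiv:1711.04286 — 3 statements merged into one kernel-verified Lean document; each statement's English description precedes it below -/
import Mathlib

section
/- Let C be a convex cone in a real vector space and let W : C → ℝ be ray-strictly convex, meaning W((1-θ)v₁ + θv₂) ≤ (1-θ)W(v₁) + θW(v₂) for all v₁, v₂ ∈ C and θ ∈ (0,1), with strict inequality unless v₂ = c·v₁ for some constant c > 0. Suppose v₁, v₂ ∈ C are such that the function Φ(θ) = W((1-θ)v₁ + θv₂) is differentiable on (−δ, 1+δ) and Φ'(0) = Φ'(1). Then v₂ = c·v₁ for some constant c > 0. -/
open Set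

/-- `W` is ray-strictly convex on the convex cone `C`: the convexity inequality holds,
with strict inequality unless the two points are positive scalar multiples of each other. -/
def RayStrictConvexOn {V : Type*} [AddCommGroup V] [Module ℝ V]
    (C : Set V) (W : V → ℝ) : Prop :=
  ∀ v₁ ∈ C, ∀ v₂ ∈ C, ∀ θ ∈ Set.Ioo (0:ℝ) 1,
    W ((1 - θ) • v₁ + θ • v₂) ≤ (1 - θ) * W v₁ + θ * W v₂ ∧
    (W ((1 - θ) • v₁ + θ • v₂) = (1 - θ) * W v₁ + θ * W v₂ →
      ∃ c : ℝ, 0 < c ∧ v₂ = c • v₁)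

theorem ray_strict_convex_equal_derivs_proportional
    {V : Type*} [AddCommGroup V] [Module ℝ V]
    (C : Set V) (hCconv : Convex ℝ C)
    (hCcone : ∀ (c : ℝ), 0 < c → ∀ v ∈ C, c • v ∈ C)
    (W : V → ℝ) (hW : RayStrictConvexOn C W)
    (v₁ : V) (hv₁ : v₁ ∈ C) (v₂ : V) (hv₂ : v₂ ∈ C)
    (δ : ℝ) (hδ : 0 < δ) (Φ' : ℝ → ℝ)
    (hderiv : ∀ θ ∈ Set.Ioo (-δ) (1 + δ),
      HasDerivAt (fun θ : ℝ => W ((1 - θ) • v₁ + θ • v₂)) (Φ' θ) θ)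
    (heq : Φ' 0 = Φ' 1) :
    ∃ c : ℝ, 0 < c ∧ v₂ = c • v₁ := by
  classical
  set f : ℝ → ℝ := fun θ : ℝ => W ((1 - θ) • v₁ + θ • v₂) with hf
  -- midpoint
  set u : V := (1/2 : ℝ) • v₁ + (1/2 : ℝ) • v₂ with hu
  have huC : u ∈ C := by
    have := hCconv hv₁ hv₂ (by norm_num : (0:ℝ) ≤ 1/2) (by norm_num : (0:ℝ) ≤ 1/2) (by norm_num)
    simpa [hu] using this
  obtain ⟨hle, heqc⟩ := hW v₁ hv₁ v₂ hv₂ (1/2) (by norm_num)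
  have hf0 : f 0 = W v₁ := by simp [hf]
  have hf1 : f 1 = W v₂ := by simp [hf]
  have hfhalf : f (1/2) = W u := by
    show W ((1 - (1/2:ℝ)) • v₁ + (1/2:ℝ) • v₂) = W u
    congr 1; rw [hu]; module
  rcases eq_or_lt_of_le hle with hEq | hLt
  · exact heqc hEq
  -- strict case: derive contradiction
  exfalso
  have hhalf : f (1/2) < (1/2) * f 0 + (1/2) * f 1 := by
    rw [hf0, hf1]
    calc f (1/2) = W ((1 - (1/2:ℝ)) • v₁ + (1/2:ℝ) • v₂) := by norm_num [hf]
    _ < (1 - 1/2) * W v₁ + (1/2) * W v₂ := hLt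
    _ = (1/2) * W v₁ + (1/2) * W v₂ := by norm_num
  -- convexity inequality on [0, 1/2]
  have hA : ∀ t ∈ Set.Ioo (0:ℝ) (1/2), f t ≤ (1 - 2*t) * f 0 + (2*t) * f (1/2) := by
    intro t ht
    have h2t : (2*t) ∈ Set.Ioo (0:ℝ) 1 := ⟨by linarith [ht.1], by linarith [ht.2]⟩
    have := (hW v₁ hv₁ u huC (2*t) h2t).1
    have harg : (1 - 2*t) • v₁ + (2*t) • u = (1 - t) • v₁ + t • v₂ := by
      rw [hu]; module
    rw [harg] at this
    rw [hf0, hfhalf]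
    exact this
  -- convexity inequality on [1/2, 1]
  have hB : ∀ t ∈ Set.Ioo (1/2:ℝ) 1, f t ≤ (1 - (2*t - 1)) * f (1/2) + (2*t - 1) * f 1 := by
    intro t ht
    have hθ : (2*t - 1) ∈ Set.Ioo (0:ℝ) 1 := ⟨by linarith [ht.1], by linarith [ht.2]⟩
    have := (hW u huC v₂ hv₂ (2*t - 1) hθ).1
    have harg : (1 - (2*t - 1)) • u + (2*t - 1) • v₂ = (1 - t) • v₁ + t • v₂ := by
      rw [hu]; module
    rw [harg] at this
    rw [hf1, hfhalf]
    exact this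
  -- derivative bounds
  have hd0 : HasDerivAt f (Φ' 0) 0 := hderiv 0 ⟨by linarith, by linarith⟩
  have hd1 : HasDerivAt f (Φ' 1) 1 := hderiv 1 ⟨by linarith, by linarith⟩
  have hslope0 : Filter.Tendsto (slope f 0) (nhdsWithin 0 (Set.Ioi 0)) (nhds (Φ' 0)) :=
    (hasDerivAt_iff_tendsto_slope.mp hd0).mono_left
      (nhdsWithin_mono _ (fun x hx => ne_of_gt hx))
  have hslope1 : Filter.Tendsto (slope f 1) (nhdsWithin 1 (Set.Iio 1)) (nhds (Φ' 1)) :=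
    (hasDerivAt_iff_tendsto_slope.mp hd1).mono_left
      (nhdsWithin_mono _ (fun x hx => ne_of_lt hx))
  have hbound0 : Φ' 0 ≤ 2 * (f (1/2) - f 0) := by
    refine le_of_tendsto hslope0 ?_
    filter_upwards [Ioo_mem_nhdsGT_of_mem (by norm_num : (0:ℝ) ∈ Set.Ico (0:ℝ) (1/2))] with t ht
    have h := hA t ht
    have ht0 : (0:ℝ) < t := ht.1
    rw [slope_def_field, sub_zero, div_le_iff₀ ht0]
    nlinarith [h]
  have hbound1 : 2 * (f 1 - f (1/2)) ≤ Φ' 1 := by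
    refine ge_of_tendsto hslope1 ?_
    filter_upwards [Ioo_mem_nhdsLT_of_mem (by norm_num : (1:ℝ) ∈ Set.Ioc (1/2:ℝ) 1)] with t ht
    have h := hB t ht
    have ht1 : t - 1 < 0 := by linarith [ht.2]
    rw [slope_def_field, le_div_iff_of_neg ht1]
    nlinarith [h]
  rw [heq] at hbound0
  linarith
end

section
/- Let p > 1, r ≥ 1 be constants, and for a, b > 0 and x, y ∈ ℝ^N define the expression D(a,b,x,y) = |x|^{p-2} x · (x − r(b/a)^{r-1} y + (r−1)(b/a)^r x) + |y|^{p-2} y · (y − r(a/b)^{r-1} x + (r−1)(a/b)^r y). If p ≥ r then D(a,b,x,y) ≥ 0 for all a, b > 0 and x, y ∈ ℝ^N. -/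
/-!
Writing `X = ‖x‖`, `Y = ‖y‖` and `t = b / a`, Cauchy–Schwarz bounds the first summand below by
`(1 + (r - 1) t^r) X^p - r t^(r-1) X^(p-1) Y`, and the weighted AM–GM inequality with weights
`(r-1)/r, (p-r)/(pr), 1/p` at the points `t^r X^p, X^p, Y^p` bounds this below by
`r/p (X^p - Y^p)`. The second summand is the same expression with `(a, x)` and `(b, y)`
exchanged, so it is at least `r/p (Y^p - X^p)`, and the two lower bounds cancel.
-/

open Set RealInnerProductSpace

section

variable {p r : ℝ}

lemma rpow_young_three (hp : 1 < p) (hr : 1 ≤ r) (hpr : r ≤ p)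
    {t X Y : ℝ} (ht : 0 ≤ t) (hX : 0 ≤ X) (hY : 0 ≤ Y) :
    r * (t ^ (r - 1) * X ^ (p - 1) * Y) ≤
      (r - 1) * t ^ r * X ^ p + (p - r) / p * X ^ p + r / p * Y ^ p := by
  have hp0 : p ≠ 0 := by positivity
  have hr0 : r ≠ 0 := by positivity
  have amgm := Real.geom_mean_le_arith_mean3_weighted
    (w₁ := (r - 1) / r) (w₂ := (p - r) / (p * r)) (w₃ := 1 / p)
    (div_nonneg (by linarith) (by positivity)) (div_nonneg (by linarith) (by positivity))
    (by positivity) (by positivity : 0 ≤ t ^ r * X ^ p) (by positivity : 0 ≤ X ^ p)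
    (by positivity : 0 ≤ Y ^ p) (by field_simp; ring)
  have hgeom : (t ^ r * X ^ p) ^ ((r - 1) / r) * (X ^ p) ^ ((p - r) / (p * r)) * (Y ^ p) ^ (1 / p)
      = t ^ (r - 1) * X ^ (p - 1) * Y := by
    have ht' : (t ^ r) ^ ((r - 1) / r) = t ^ (r - 1) := by
      rw [← Real.rpow_mul ht]; congr 1; field_simp
    have hX' : (X ^ p) ^ ((r - 1) / r) * (X ^ p) ^ ((p - r) / (p * r)) = X ^ (p - 1) := by
      have hexp : p * ((r - 1) / r) + p * ((p - r) / (p * r)) = p - 1 := by field_simp; ring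
      rw [← Real.rpow_mul hX, ← Real.rpow_mul hX, ← Real.rpow_add' hX (by linarith), hexp]
    have hY' : (Y ^ p) ^ (1 / p) = Y := by
      rw [one_div, Real.rpow_rpow_inv hY hp0]
    rw [Real.mul_rpow (by positivity) (by positivity), ht', mul_assoc (t ^ (r - 1)), hX', hY']
  rw [hgeom] at amgm
  calc r * (t ^ (r - 1) * X ^ (p - 1) * Y)
      ≤ r * ((r - 1) / r * (t ^ r * X ^ p) + (p - r) / (p * r) * X ^ p + 1 / p * Y ^ p) :=
        mul_le_mul_of_nonneg_left amgm (by linarith)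
    _ = (r - 1) * t ^ r * X ^ p + (p - r) / p * X ^ p + r / p * Y ^ p := by
        field_simp

variable {E : Type*} [NormedAddCommGroup E] [InnerProductSpace ℝ E]

lemma sub_rpow_le_rpow_sub_two_mul_inner (hp : 1 < p) (hr : 1 ≤ r) (hpr : r ≤ p)
    {t : ℝ} (ht : 0 ≤ t) (x y : E) :
    r / p * (‖x‖ ^ p - ‖y‖ ^ p) ≤
      ‖x‖ ^ (p - 2) * ⟪x, x - (r * t ^ (r - 1)) • y + ((r - 1) * t ^ r) • x⟫ := by
  have hinner : ⟪x, x - (r * t ^ (r - 1)) • y + ((r - 1) * t ^ r) • x⟫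
      = (1 + (r - 1) * t ^ r) * ‖x‖ ^ 2 - r * t ^ (r - 1) * ⟪x, y⟫ := by
    simp only [inner_add_right, inner_sub_right, real_inner_smul_right,
      real_inner_self_eq_norm_sq]
    ring
  have hsq : ‖x‖ ^ (p - 2) * ‖x‖ ^ 2 = ‖x‖ ^ p := by
    rw [← Real.rpow_two, ← Real.rpow_add' (norm_nonneg x) (by linarith), sub_add_cancel]
  have hself : ‖x‖ ^ (p - 2) * ‖x‖ = ‖x‖ ^ (p - 1) := by
    rw [← Real.rpow_add_one' (norm_nonneg x) (by linarith)]; ring_nf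
  have hyoung := rpow_young_three hp hr hpr ht (norm_nonneg x) (norm_nonneg y)
  have hweights : (p - r) / p + r / p = 1 := by field_simp; ring
  calc r / p * (‖x‖ ^ p - ‖y‖ ^ p)
      ≤ (1 + (r - 1) * t ^ r) * ‖x‖ ^ p - r * (t ^ (r - 1) * ‖x‖ ^ (p - 1) * ‖y‖) := by
        linear_combination hyoung + ‖x‖ ^ p * hweights
    _ = (1 + (r - 1) * t ^ r) * ‖x‖ ^ p - r * t ^ (r - 1) * ‖x‖ ^ (p - 2) * (‖x‖ * ‖y‖) := by
        rw [← hself]; ring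
    _ ≤ (1 + (r - 1) * t ^ r) * ‖x‖ ^ p - r * t ^ (r - 1) * ‖x‖ ^ (p - 2) * ⟪x, y⟫ := by
        gcongr; exact real_inner_le_norm x y
    _ = ‖x‖ ^ (p - 2) * ⟪x, x - (r * t ^ (r - 1)) • y + ((r - 1) * t ^ r) • x⟫ := by
        rw [hinner, ← hsq]; ring

end

theorem pointwise_diaz_saa_p_laplacian
    (N : ℕ) (p r : ℝ) (hp : 1 < p) (hr : 1 ≤ r) (hpr : r ≤ p)
    (a b : ℝ) (ha : 0 < a) (hb : 0 < b)
    (x y : EuclideanSpace ℝ (Fin N)) :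
    0 ≤ ‖x‖ ^ (p - 2) * ⟪x, x - (r * (b / a) ^ (r - 1)) • y + ((r - 1) * (b / a) ^ r) • x⟫
      + ‖y‖ ^ (p - 2) * ⟪y, y - (r * (a / b) ^ (r - 1)) • x + ((r - 1) * (a / b) ^ r) • y⟫ := by
  have hx := sub_rpow_le_rpow_sub_two_mul_inner hp hr hpr (div_nonneg hb.le ha.le) x y
  have hy := sub_rpow_le_rpow_sub_two_mul_inner hp hr hpr (div_nonneg ha.le hb.le) y x
  linarith
end

section
/- Let r > 1 and for each fixed x let f(x,·) : (0,∞) → ℝ≥0 be such that s ↦ f(x,s)/s^{r-1} is strictly monotone decreasing. Define F(x,u) = ∫₀ᵘ f(x,s) ds for u ≥ 0. Then for each fixed x, the function t ↦ −F(x, t^{1/r}) : (0,∞) → ℝ is strictly convex. -/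
open Set MeasureTheory

lemma hasDerivAt_integral_rpow {f : ℝ → ℝ} (hf : ContinuousOn f (Ici 0)) (p : ℝ) {t : ℝ}
    (ht : 0 < t) :
    HasDerivAt (fun t => ∫ s in (0:ℝ)..t ^ p, f s) (f (t ^ p) * (p * t ^ (p - 1))) t := by
  have hu : 0 < t ^ p := Real.rpow_pos_of_pos ht p
  have hint : IntervalIntegrable f volume 0 (t ^ p) :=
    (hf.mono (uIcc_of_le hu.le ▸ Icc_subset_Ici_self)).intervalIntegrable
  have hFTC : HasDerivAt (fun u => ∫ s in (0:ℝ)..u, f s) (f (t ^ p)) (t ^ p) :=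
    intervalIntegral.integral_hasDerivAt_right hint
      ((hf.mono Ioi_subset_Ici_self).stronglyMeasurableAtFilter isOpen_Ioi _ hu)
      (hf.continuousAt (Ici_mem_nhds hu))
  exact hFTC.comp t (Real.hasDerivAt_rpow_const (Or.inl ht.ne'))

lemma rpow_one_div_sub_one {r t : ℝ} (hr : r ≠ 0) (ht : 0 < t) :
    t ^ (1 / r - 1) = ((t ^ (1 / r)) ^ (r - 1))⁻¹ := by
  rw [← Real.rpow_mul ht.le, ← Real.rpow_neg ht.le]
  congr 1
  field_simp
  ring

lemma hasDerivAt_integral_rpow_one_div {r : ℝ} (hr : r ≠ 0) {f : ℝ → ℝ}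
    (hf : ContinuousOn f (Ici 0)) {t : ℝ} (ht : 0 < t) :
    HasDerivAt (fun t => ∫ s in (0:ℝ)..t ^ (1 / r), f s)
      (1 / r * (f (t ^ (1 / r)) / (t ^ (1 / r)) ^ (r - 1))) t := by
  convert hasDerivAt_integral_rpow hf (1 / r) ht using 1
  rw [rpow_one_div_sub_one hr ht]
  ring

/-- The derivative `(1/r) g(t^{1/r})`, with `g s = f s / s^{r-1}`, decreases strictly in `t`. -/
lemma strictConcaveOn_integral_rpow_one_div {r : ℝ} (hr : 0 < r) {f : ℝ → ℝ}
    (hf : ContinuousOn f (Ici 0))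
    (hanti : StrictAntiOn (fun s => f s / s ^ (r - 1)) (Ioi 0)) :
    StrictConcaveOn ℝ (Ioi 0) (fun t : ℝ => ∫ s in (0:ℝ)..t ^ (1 / r), f s) := by
  have hderiv := fun t (ht : t ∈ Ioi (0:ℝ)) => hasDerivAt_integral_rpow_one_div hr.ne' hf ht
  have hdecr : StrictAntiOn (fun t : ℝ => 1 / r * (f (t ^ (1 / r)) / (t ^ (1 / r)) ^ (r - 1)))
      (Ioi 0) := by
    have hroot : StrictMonoOn (fun t : ℝ => t ^ (1 / r)) (Ioi 0) :=
      (Real.strictMonoOn_rpow_Ici_of_exponent_pos (by positivity)).mono Ioi_subset_Ici_self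
    have hcomp := hanti.comp_strictMonoOn hroot fun t (ht : 0 < t) => Real.rpow_pos_of_pos ht _
    exact fun a ha b hb hab => mul_lt_mul_of_pos_left (hcomp ha hb hab) (by positivity)
  refine StrictAntiOn.strictConcaveOn_of_deriv (convex_Ioi 0)
    (fun t ht => (hderiv t ht).continuousAt.continuousWithinAt) ?_
  rw [interior_Ioi]
  exact hdecr.congr fun t ht => (hderiv t ht).deriv.symm

theorem substituted_potential_strictly_convex_general
    (r : ℝ) (hr : 1 < r)
    (f : ℝ → ℝ)
    (hfcont : ContinuousOn f (Set.Ici 0))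
    (hanti : StrictAntiOn (fun s => f s / s ^ (r - 1)) (Set.Ioi 0)) :
    StrictConvexOn ℝ (Set.Ioi 0)
      (fun t : ℝ => -(∫ s in (0:ℝ)..(t ^ (1 / r)), f s)) :=
  (strictConcaveOn_integral_rpow_one_div (by linarith) hfcont hanti).neg

theorem substituted_potential_strictly_convex
    (r : ℝ) (hr : 1 < r)
    (f : ℝ → ℝ)
    (hfnonneg : ∀ s ∈ Set.Ioi (0:ℝ), 0 ≤ f s)
    (hfcont : ContinuousOn f (Set.Ici 0))
    (hanti : StrictAntiOn (fun s => f s / s ^ (r - 1)) (Set.Ioi 0)) :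
    StrictConvexOn ℝ (Set.Ioi 0)
      (fun t : ℝ => -(∫ s in (0:ℝ)..(t ^ (1 / r)), f s)) :=
  substituted_potential_strictly_convex_general r hr f hfcont hanti
end
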